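/- Let S_c(p,q) denote the 3×3 matrix with rows (1 − c²q²/2, −c²pq/2, −cq), (−c²pq/2, 1 − c²p²/2, −cp), (cq, cp, 1 − c²(p²+q²)/2). For c = (c₁,…,c_m) and vectors p, q ∈ ℝᵐ, set Π_c(p,q) := S_{c₁}(p₁,q₁)⋯S_{c_m}(p_m,q_m). Then the upper-left 2×2 submatrix of Π_c(p,q) equals Id − (1/2)·[[ (c·q)², (c·p)(c·q) − Δ_c(p,q) ], [ (c·p)(c·q) + Δ_c(p,q), (c·p)² ]] + O(4), where c·p = Σ c_i p_i, c·q = Σ c_i q_i, and Δ_c(p,q) := Σ_{1≤i<j≤m} c_i c_j (p_i q_j − p_j q_i) (and Δ_c := 0 when m = 1); here O(4) denotes terms of total degree ≥ 4 in (p,q). -/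

import Mathlib

open Asymptotics

/-- The matrix `S_c(p,q)`. -/
noncomputable def Smat (c p q : ℝ) : Matrix (Fin 3) (Fin 3) ℝ :=
  !![1 - c ^ 2 * q ^ 2 / 2, -(c ^ 2 * p * q) / 2, -(c * q);
     -(c ^ 2 * p * q) / 2, 1 - c ^ 2 * p ^ 2 / 2, -(c * p);
     c * q, c * p, 1 - c ^ 2 * (p ^ 2 + q ^ 2) / 2]

/-!
Put `y = (c q, c p)`; then `S_c(p,q) = I + Y + Y²/2` with `Y = [[0, -y], [yᵀ, 0]] ∈ 𝔰𝔬(3)`.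
Append the factors one at a time and follow the first two rows of the partial product. With `s`
the sum of the vectors `y` so far and `H = s sᵀ + Δ [[0, -1], [1, 0]]` the bracket matrix of the
statement, the upper-left block is `I - H/2 + O(4)` and the first two entries of the last column
are `-s + O(3)`. One more factor changes `s` by `y` and `Δ` by `s₁ y₀ - s₀ y₁`, hence `H` by
`y yᵀ + 2 s yᵀ`, which are exactly the new second-order terms. The upper-left error is `O(4)`, not
just `O(3)`, because `Y` swaps the plane and the axis, so odd-order terms never reach the
upper-left block.
-/

open Filter Topology Finset

section VanishesToOrder

variable {E : Type*} [SeminormedAddCommGroup E]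

def VanishesToOrder (k : ℕ) (f : E → ℝ) : Prop :=
  f =O[𝓝 0] fun x => ‖x‖ ^ k

namespace VanishesToOrder

variable {k l : ℕ} {f g : E → ℝ}

theorem congr (hf : VanishesToOrder k f) (h : ∀ x, f x = g x) : VanishesToOrder k g :=
  hf.congr_left h

theorem add (hf : VanishesToOrder k f) (hg : VanishesToOrder k g) :
    VanishesToOrder k fun x => f x + g x :=
  IsBigO.add hf hg

theorem sub (hf : VanishesToOrder k f) (hg : VanishesToOrder k g) :
    VanishesToOrder k fun x => f x - g x :=
  IsBigO.sub hf hg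

theorem sum {ι : Type*} (s : Finset ι) {f : ι → E → ℝ} (h : ∀ i ∈ s, VanishesToOrder k (f i)) :
    VanishesToOrder k fun x => ∑ i ∈ s, f i x :=
  IsBigO.fun_sum h

theorem const_mul (hf : VanishesToOrder k f) (a : ℝ) : VanishesToOrder k fun x => a * f x :=
  IsBigO.const_mul_left hf a

theorem div_const (hf : VanishesToOrder k f) (a : ℝ) : VanishesToOrder k fun x => f x / a := by
  simpa only [div_eq_inv_mul] using hf.const_mul a⁻¹

theorem mul (hf : VanishesToOrder k f) (hg : VanishesToOrder l g) :
    VanishesToOrder (k + l) fun x => f x * g x := by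
  simpa only [VanishesToOrder, pow_add] using IsBigO.mul hf hg

theorem mono (hf : VanishesToOrder l f) (h : k ≤ l) : VanishesToOrder k f := by
  refine hf.trans (IsBigO.of_bound 1 ?_)
  filter_upwards [Metric.closedBall_mem_nhds (0 : E) one_pos] with x hx
  rw [mem_closedBall_zero_iff] at hx
  simpa using pow_le_pow_of_le_one (norm_nonneg x) hx h

theorem tendsto_zero (hf : VanishesToOrder 1 f) : Tendsto f (𝓝 0) (𝓝 0) :=
  IsBigO.trans_tendsto hf (by simpa using tendsto_norm_zero (E := E))

end VanishesToOrder

theorem vanishesToOrder_zero_const (a : ℝ) : VanishesToOrder 0 fun _ : E => a := by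
  simpa [VanishesToOrder] using isBigO_const_const a (one_ne_zero (α := ℝ)) (𝓝 (0 : E))

end VanishesToOrder

theorem Fin.Ioi_castSucc_eq_insert_last {m : ℕ} (a : Fin m) :
    Ioi a.castSucc = insert (Fin.last m) ((Ioi a).map Fin.castSuccEmb) := by
  ext b
  induction b using Fin.lastCases <;> simp [Fin.castSucc_lt_last, Fin.le_last]

theorem Fin.sum_Ioi_castSucc {M : Type*} [AddCommMonoid M] {m : ℕ} (f : Fin (m + 1) → M)
    (a : Fin m) : ∑ b ∈ Ioi a.castSucc, f b = ∑ b ∈ Ioi a, f b.castSucc + f (Fin.last m) := by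
  rw [Fin.Ioi_castSucc_eq_insert_last, sum_insert (by simp), sum_map, add_comm]
  rfl

def Smat.gen (c p q : ℝ) : Fin 2 → ℝ := ![c * q, c * p]

def Smat.genSum {m : ℕ} (c p q : Fin m → ℝ) : Fin 2 → ℝ := ∑ l, Smat.gen (c l) (p l) (q l)

/-- The paper's `Δ_c(p,q)`: twice the Lévy area of the polygonal path with steps
`(c l * p l, c l * q l)`. -/
def levyArea {m : ℕ} (c p q : Fin m → ℝ) : ℝ :=
  ∑ a, ∑ b ∈ Ioi a, c a * c b * (p a * q b - p b * q a)

/-- For `s = (c·q, c·p)` this is the bracket matrix `[[(c·q)², (c·p)(c·q) - Δ], [(c·p)(c·q) + Δ,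
(c·p)²]]` of the statement. -/
def quadraticPart (s : Fin 2 → ℝ) (Δ : ℝ) : Matrix (Fin 2) (Fin 2) ℝ :=
  Matrix.of fun i k => s i * s k + Δ * !![0, -1; 1, 0] i k

section Snoc

variable {m : ℕ} (c p q : Fin (m + 1) → ℝ)

theorem Smat.genSum_succ :
    Smat.genSum c p q
      = Smat.genSum (fun l => c l.castSucc) (fun l => p l.castSucc) (fun l => q l.castSucc)
        + Smat.gen (c (Fin.last m)) (p (Fin.last m)) (q (Fin.last m)) :=
  Fin.sum_univ_castSucc _

theorem levyArea_succ :
    levyArea c p q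
      = levyArea (fun l => c l.castSucc) (fun l => p l.castSucc) (fun l => q l.castSucc)
        + (Smat.genSum (fun l => c l.castSucc) (fun l => p l.castSucc) (fun l => q l.castSucc) 1
            * Smat.gen (c (Fin.last m)) (p (Fin.last m)) (q (Fin.last m)) 0
          - Smat.genSum (fun l => c l.castSucc) (fun l => p l.castSucc) (fun l => q l.castSucc) 0
            * Smat.gen (c (Fin.last m)) (p (Fin.last m)) (q (Fin.last m)) 1) := by
  have hlast : Ioi (Fin.last m) = ∅ := by simp [Fin.top_eq_last]
  simp only [levyArea, Smat.genSum, Fin.sum_univ_castSucc (fun a => ∑ b ∈ Ioi a, _),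
    Fin.sum_Ioi_castSucc, hlast, sum_empty, add_zero, sum_add_distrib, Finset.sum_apply]
  congr 1
  simp only [Smat.gen, Matrix.cons_val_zero, Matrix.cons_val_one, Matrix.cons_val_fin_one,
    sum_mul, ← sum_sub_distrib]
  exact sum_congr rfl fun a _ => by ring

end Snoc

theorem mul_Smat_upperLeft (A : Matrix (Fin 3) (Fin 3) ℝ) (s : Fin 2 → ℝ) (Δ c p q : ℝ)
    (i j : Fin 2) :
    (A * Smat c p q) i.castSucc j.castSucc
        - ((1 : Matrix (Fin 2) (Fin 2) ℝ) i j
          - quadraticPart (s + Smat.gen c p q)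
              (Δ + (s 1 * Smat.gen c p q 0 - s 0 * Smat.gen c p q 1)) i j / 2)
      = ∑ k, (A i.castSucc k.castSucc - ((1 : Matrix (Fin 2) (Fin 2) ℝ) i k
            - quadraticPart s Δ i k / 2)) * Smat c p q k.castSucc j.castSucc
        + (A i.castSucc (Fin.last 2) + s i) * Smat.gen c p q j
        + (∑ k, quadraticPart s Δ i k * Smat.gen c p q k) * Smat.gen c p q j / 4 := by
  fin_cases i <;> fin_cases j <;>
    simp [Matrix.mul_apply, Fin.sum_univ_succ, Matrix.one_apply, Smat, Smat.gen,
      quadraticPart] <;> ring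

theorem mul_Smat_upperRight (A : Matrix (Fin 3) (Fin 3) ℝ) (H : Matrix (Fin 2) (Fin 2) ℝ)
    (s : Fin 2 → ℝ) (c p q : ℝ) (i : Fin 2) :
    (A * Smat c p q) i.castSucc (Fin.last 2) + (s + Smat.gen c p q) i
      = ∑ k, (A i.castSucc k.castSucc - ((1 : Matrix (Fin 2) (Fin 2) ℝ) i k - H i k / 2))
            * Smat c p q k.castSucc (Fin.last 2)
        + (A i.castSucc (Fin.last 2) + s i) * Smat c p q (Fin.last 2) (Fin.last 2)
        + (∑ k, H i k * Smat.gen c p q k) / 2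
        + (∑ k, Smat.gen c p q k * Smat.gen c p q k) * s i / 2 := by
  fin_cases i <;>
    simp [Matrix.mul_apply, Fin.sum_univ_succ, Matrix.one_apply, Smat, Smat.gen] <;> ring

section Estimates

variable {E : Type*} [SeminormedAddCommGroup E]

theorem vanishesToOrder_zero_Smat (c : ℝ) {p q : E → ℝ} (hp : VanishesToOrder 1 p)
    (hq : VanishesToOrder 1 q) (k j : Fin 3) :
    VanishesToOrder 0 fun x => Smat c (p x) (q x) k j := by
  have hcont : Continuous fun z : ℝ × ℝ => Smat c z.1 z.2 k j := by
    fin_cases k <;> fin_cases j <;> simp [Smat] <;> fun_prop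
  have hlim := (hcont.tendsto (0, 0)).comp (hp.tendsto_zero.prodMk_nhds hq.tendsto_zero)
  simpa [VanishesToOrder] using hlim.isBigO_one ℝ

theorem vanishesToOrder_one_Smat_gen (c : ℝ) {p q : E → ℝ} (hp : VanishesToOrder 1 p)
    (hq : VanishesToOrder 1 q) (k : Fin 2) :
    VanishesToOrder 1 fun x => Smat.gen c (p x) (q x) k := by
  fin_cases k
  exacts [hq.const_mul c, hp.const_mul c]

section Family

variable {m : ℕ} (c : Fin m → ℝ) {p q : Fin m → E → ℝ}
  (hp : ∀ l, VanishesToOrder 1 (p l)) (hq : ∀ l, VanishesToOrder 1 (q l))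
include hp hq

theorem vanishesToOrder_one_Smat_genSum (k : Fin 2) :
    VanishesToOrder 1 fun x => Smat.genSum c (p · x) (q · x) k := by
  simp only [Smat.genSum, Finset.sum_apply]
  exact .sum _ fun l _ => vanishesToOrder_one_Smat_gen _ (hp l) (hq l) k

theorem vanishesToOrder_two_levyArea : VanishesToOrder 2 fun x => levyArea c (p · x) (q · x) :=
  .sum _ fun a _ => .sum _ fun b _ =>
    (((hp a).mul (hq b)).sub ((hp b).mul (hq a))).const_mul (c a * c b)

theorem vanishesToOrder_two_quadraticPart (i k : Fin 2) :
    VanishesToOrder 2 fun x =>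
      quadraticPart (Smat.genSum c (p · x) (q · x)) (levyArea c (p · x) (q · x)) i k :=
  ((vanishesToOrder_one_Smat_genSum c hp hq i).mul (vanishesToOrder_one_Smat_genSum c hp hq k)).add
    ((vanishesToOrder_two_levyArea c hp hq).mul (vanishesToOrder_zero_const _))

end Family

theorem prod_Smat_upperRows_expansion {m : ℕ} (c : Fin m → ℝ) {p q : Fin m → E → ℝ}
    (hp : ∀ l, VanishesToOrder 1 (p l)) (hq : ∀ l, VanishesToOrder 1 (q l)) :
    (∀ i j : Fin 2, VanishesToOrder 4 fun x =>
      (List.ofFn fun l => Smat (c l) (p l x) (q l x)).prod i.castSucc j.castSucc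
        - ((1 : Matrix (Fin 2) (Fin 2) ℝ) i j
          - quadraticPart (Smat.genSum c (p · x) (q · x)) (levyArea c (p · x) (q · x)) i j / 2)) ∧
    (∀ i : Fin 2, VanishesToOrder 3 fun x =>
      (List.ofFn fun l => Smat (c l) (p l x) (q l x)).prod i.castSucc (Fin.last 2)
        + Smat.genSum c (p · x) (q · x) i) := by
  induction m with
  | zero =>
    refine ⟨fun i j => .congr (isBigO_zero _ _) fun x => ?_,
      fun i => .congr (isBigO_zero _ _) fun x => ?_⟩
    · simp [Smat.genSum, levyArea, quadraticPart, Matrix.one_apply]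
    · rw [List.ofFn_zero, List.prod_nil, Matrix.one_apply_ne (Fin.castSucc_lt_last i).ne]
      simp [Smat.genSum]
  | succ m ih =>
    have hpInit (l : Fin m) := hp l.castSucc
    have hqInit (l : Fin m) := hq l.castSucc
    obtain ⟨ihLeft, ihRight⟩ := ih (fun l => c l.castSucc) hpInit hqInit
    have hS := vanishesToOrder_zero_Smat (c (Fin.last m)) (hp (Fin.last m)) (hq (Fin.last m))
    have hy := vanishesToOrder_one_Smat_gen (c (Fin.last m)) (hp (Fin.last m)) (hq (Fin.last m))
    have hs := vanishesToOrder_one_Smat_genSum (fun l => c l.castSucc) hpInit hqInit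
    have hH := vanishesToOrder_two_quadraticPart (fun l => c l.castSucc) hpInit hqInit
    simp only [List.ofFn_succ', List.prod_concat, Smat.genSum_succ, levyArea_succ c]
    refine ⟨fun i j => ?_, fun i => ?_⟩
    · exact .congr
        (((VanishesToOrder.sum _ fun k _ => (ihLeft i k).mul (hS _ _)).add
          ((ihRight i).mul (hy j))).add
          (((VanishesToOrder.sum _ fun k _ => (hH i k).mul (hy k)).mul (hy j)).div_const 4))
        fun x => by exact (mul_Smat_upperLeft _ _ _ _ _ _ i j).symm
    · exact .congr
        (((((VanishesToOrder.sum _ fun k _ => (ihLeft i k).mul (hS _ _)).mono (by norm_num)).add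
          ((ihRight i).mul (hS _ _))).add
          ((VanishesToOrder.sum _ fun k _ => (hH i k).mul (hy k)).div_const 2)).add
          (((VanishesToOrder.sum _ fun k _ => (hy k).mul (hy k)).mul (hs i)).div_const 2))
        fun x => by exact (mul_Smat_upperRight _ _ _ _ _ _ i).symm

end Estimates

theorem stmt_15 (m : ℕ) (c : Fin m → ℝ) (i j : Fin 2) :
    (fun x : (Fin m → ℝ) × (Fin m → ℝ) =>
        (List.ofFn (fun l : Fin m => Smat (c l) (x.1 l) (x.2 l))).prod i.castSucc j.castSucc
          - !![1 - (∑ l, c l * x.2 l) ^ 2 / 2,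
               -((∑ l, c l * x.1 l) * (∑ l, c l * x.2 l)
                  - ∑ a : Fin m, ∑ b ∈ Finset.Ioi a,
                      c a * c b * (x.1 a * x.2 b - x.1 b * x.2 a)) / 2;
               -((∑ l, c l * x.1 l) * (∑ l, c l * x.2 l)
                  + ∑ a : Fin m, ∑ b ∈ Finset.Ioi a,
                      c a * c b * (x.1 a * x.2 b - x.1 b * x.2 a)) / 2,
               1 - (∑ l, c l * x.1 l) ^ 2 / 2] i j)
      =O[nhds 0] fun x : (Fin m → ℝ) × (Fin m → ℝ) => ‖x‖ ^ 4 := by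
  have hp (l : Fin m) : VanishesToOrder 1 fun x : (Fin m → ℝ) × (Fin m → ℝ) => x.1 l :=
    isBigO_of_le _ fun x => by simpa using (norm_le_pi_norm x.1 l).trans (norm_fst_le x)
  have hq (l : Fin m) : VanishesToOrder 1 fun x : (Fin m → ℝ) × (Fin m → ℝ) => x.2 l :=
    isBigO_of_le _ fun x => by simpa using (norm_le_pi_norm x.2 l).trans (norm_snd_le x)
  refine ((prod_Smat_upperRows_expansion c hp hq).1 i j).congr fun x => ?_
  congr 1
  fin_cases i <;> fin_cases j <;>
    simp [quadraticPart, Smat.genSum, levyArea, Smat.gen, Finset.sum_apply] <;> ring
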